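/- arXiv:1607.08119 — 5 statements merged into one kernel-verified Lean document; each statement's English description precedes it below -/
import Mathlib

section
/- If a real 8×8 block matrix T = [[A, O],[C, D]] fixes (up to nonzero scalars) both the Study quadric with matrix [[O,I],[I,O]] and the quadric with matrix [[I,I],[I,O]], and A is a nonzero scalar multiple of an orthogonal matrix, then D = A and CᵀA + AᵀC = O. -/
open Matrix

/-- If `T = [[A,O],[C,D]]` fixes, up to nonzero scalars, both the Study quadric
(matrix `[[O,I],[I,O]]`) and the quadric with matrix `[[I,I],[I,O]]`, and `A` is
a nonzero scalar multiple of an orthogonal matrix, then `D = A` and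
`CᵀA + AᵀC = O`. -/
theorem study_pencil_invariance (A C D : Matrix (Fin 4) (Fin 4) ℝ)
    (T S M : Matrix (Fin 4 ⊕ Fin 4) (Fin 4 ⊕ Fin 4) ℝ)
    (hT : T = fromBlocks A 0 C D)
    (hS : S = fromBlocks 0 1 1 0)
    (hM : M = fromBlocks 1 1 1 0)
    (hA : ∃ a : ℝ, a ≠ 0 ∧ Aᵀ * A = a • (1 : Matrix (Fin 4) (Fin 4) ℝ))
    (hfixS : ∃ l : ℝ, l ≠ 0 ∧ Tᵀ * S * T = l • S)
    (hfixM : ∃ m : ℝ, m ≠ 0 ∧ Tᵀ * M * T = m • M) :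
    D = A ∧ Cᵀ * A + Aᵀ * C = 0 := by
  obtain ⟨a, ha, haA⟩ := hA
  obtain ⟨l, hl, hSeq⟩ := hfixS
  obtain ⟨m, hm, hMeq⟩ := hfixM
  subst hT hS hM
  rw [Matrix.fromBlocks_transpose, Matrix.fromBlocks_multiply,
    Matrix.fromBlocks_multiply, Matrix.fromBlocks_smul,
    Matrix.fromBlocks_inj] at hSeq hMeq
  simp only [Matrix.mul_one, Matrix.one_mul, Matrix.mul_zero, Matrix.zero_mul,
    Matrix.transpose_zero, add_zero, zero_add, smul_zero] at hSeq hMeq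
  obtain ⟨h1, h2, h3, -⟩ := hSeq
  obtain ⟨h4, h5, h6, -⟩ := hMeq
  refine ⟨?_, h1⟩
  have h7 : Aᵀ * A = m • 1 := by
    have : Aᵀ * A = (Aᵀ + Cᵀ) * A + Aᵀ * C - (Cᵀ * A + Aᵀ * C) := by noncomm_ring
    rw [this, h4, h1, sub_zero]
  have hRight : Aᵀ * (a⁻¹ • A) = 1 := by
    rw [Matrix.mul_smul, haA, smul_smul, inv_mul_cancel₀ ha, one_smul]
  letI : Invertible Aᵀ := invertibleOfRightInverse _ _ hRight
  calc D = ⅟Aᵀ * (Aᵀ * D) := by rw [← Matrix.mul_assoc, invOf_mul_self, Matrix.one_mul]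
    _ = ⅟Aᵀ * (Aᵀ * A) := by rw [h5, h7]
    _ = A := by rw [← Matrix.mul_assoc, invOf_mul_self, Matrix.one_mul]
end

section
/- Let m, n be dual quaternions with m·conj(m) = 0 and n + conj(n) a scalar. Then (mn)·conj(mn) = 0, (nm)·conj(nm) = 0, m·conj(mn) + (mn)·conj(m) = 0, and m·conj(nm) + (nm)·conj(m) = 0. Consequently (by the null-line criterion), the lines [m] ∨ [mn] and [m] ∨ [nm] are null lines. -/
/-!
Conjugation is an anti-involution of the dual quaternions, and `q * dconj q` is central for every
`q`, since both of its dual components are complex scalars. Hence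
`(mn)(mn)* = m (n n*) m* = (m m*)(n n*) = 0` and `(nm)(nm)* = n (m m*) n* = 0`, while the polar
terms factor as `m (n + n*) m*` and `(m m*) n* + n (m m*)`, which vanish because `n + n*` is a
scalar. Expanding `(a x + b y)(a x + b y)*` shows that the span of two null elements with vanishing
polar term consists of null elements.
-/

open Quaternion TrivSqZeroExt

/-- The complexified dual quaternions. -/
noncomputable abbrev DHC := DualNumber (Quaternion ℂ)

instance : IsScalarTower ℂ ℍ[ℂ] ℍ[ℂ] := @IsScalarTower.right ℂ ℍ[ℂ] _ _ Quaternion.algebra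

instance : IsScalarTower ℂ ℍ[ℂ]ᵐᵒᵖ ℍ[ℂ] :=
  ⟨fun a b c => by
    change c * (a • b.unop) = a • (c * b.unop)
    exact @mul_smul_comm ℂ ℍ[ℂ] _ _ (@Algebra.to_smulCommClass ℂ ℍ[ℂ] _ _ Quaternion.algebra) a c b.unop⟩

/-- Dual quaternion conjugation (fixing the complex scalar unit and `ε`). -/
noncomputable def dconj (q : DHC) : DHC := (star q.fst, star q.snd)

section NullElements

variable {R : Type*} [Ring R] [StarRing R]

/-- `[x]` lies on both the Study quadric and the null cone. -/
def IsNull (x : R) : Prop := x * star x = 0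

def polarNorm (x y : R) : R := x * star y + y * star x

variable {m n x y a b : R}

theorem IsNull.mul_right (hm : IsNull m) (hn : n * star n ∈ Set.center R) : IsNull (m * n) := by
  unfold IsNull at *
  calc m * n * star (m * n) = m * (n * star n * star m) := by simp only [star_mul, mul_assoc]
    _ = m * star m * (n * star n) := by rw [← Semigroup.mem_center_iff.mp hn, mul_assoc]
    _ = 0 := by rw [hm, zero_mul]

theorem IsNull.mul_left (hm : IsNull m) (n : R) : IsNull (n * m) := by
  unfold IsNull at *
  rw [star_mul, mul_assoc, ← mul_assoc m, hm, zero_mul, mul_zero]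

theorem IsNull.polarNorm_mul_right (hm : IsNull m) (hn : n + star n ∈ Set.center R) :
    polarNorm m (m * n) = 0 := by
  unfold IsNull polarNorm at *
  calc m * star (m * n) + m * n * star m = m * ((n + star n) * star m) := by
        rw [star_mul, add_mul, mul_add, mul_assoc, add_comm]
    _ = 0 := by rw [← Semigroup.mem_center_iff.mp hn, ← mul_assoc, hm, zero_mul]

theorem IsNull.polarNorm_mul_left (hm : IsNull m) (n : R) : polarNorm m (n * m) = 0 := by
  unfold IsNull polarNorm at *
  rw [star_mul, ← mul_assoc, hm, mul_assoc, hm, zero_mul, mul_zero, add_zero]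

theorem IsNull.smul_add_smul {S : Type*} [CommSemiring S] [Algebra S R]
    (hstar : ∀ (c : S) (z : R), star (c • z) = c • star z)
    (hx : IsNull x) (hy : IsNull y) (hxy : polarNorm x y = 0) (a b : S) :
    IsNull (a • x + b • y) := by
  unfold IsNull polarNorm at *
  simp only [star_add, hstar, add_mul, mul_add, smul_mul_smul_comm, hx, hy, smul_zero,
    zero_add, add_zero]
  rw [mul_comm b a, ← smul_add, add_comm, hxy, smul_zero]

end NullElements

theorem DualNumber.mem_center_of_fst_of_snd {R : Type*} [Semiring R] {x : DualNumber R}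
    (h_fst : x.fst ∈ Set.center R) (h_snd : x.snd ∈ Set.center R) :
    x ∈ Set.center (DualNumber R) := by
  refine Semigroup.mem_center_iff.mpr fun y => TrivSqZeroExt.ext ?_ ?_
  · simp only [TrivSqZeroExt.fst_mul, Semigroup.mem_center_iff.mp h_fst]
  · rw [DualNumber.snd_mul, DualNumber.snd_mul, Semigroup.mem_center_iff.mp h_fst,
      Semigroup.mem_center_iff.mp h_snd, add_comm]

@[simp] lemma dconj_fst (q : DHC) : (dconj q).fst = star q.fst := rfl

@[simp] lemma dconj_snd (q : DHC) : (dconj q).snd = star q.snd := rfl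

noncomputable instance : StarRing DHC where
  star := dconj
  star_involutive q := TrivSqZeroExt.ext (star_star q.fst) (star_star q.snd)
  star_mul p q := TrivSqZeroExt.ext (by simp [star_mul (R := ℍ[ℂ])])
    (by simp [star_add (R := ℍ[ℂ]), star_mul (R := ℍ[ℂ]), add_comm])
  star_add p q := TrivSqZeroExt.ext (star_add (R := ℍ[ℂ]) _ _) (star_add (R := ℍ[ℂ]) _ _)

namespace DHC

lemma dconj_eq_star (q : DHC) : dconj q = star q := rfl

/-- Unlike `StarModule ℂ`, conjugation of dual quaternions fixes complex scalars. -/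
lemma star_complex_smul (c : ℂ) (q : DHC) : star (c • q) = c • star q :=
  TrivSqZeroExt.ext (by simp [← dconj_eq_star]) (by simp [← dconj_eq_star])

lemma mul_star_self_mem_center (q : DHC) : q * star q ∈ Set.center DHC := by
  refine DualNumber.mem_center_of_fst_of_snd ?_ ?_
  · rw [TrivSqZeroExt.fst_mul, ← dconj_eq_star, dconj_fst, mul_star_eq_coe, ← algebraMap_def]
    exact Set.algebraMap_mem_center _
  · rw [DualNumber.snd_mul, ← dconj_eq_star, dconj_fst, dconj_snd]
    have h := self_add_star' (q.fst * star q.snd)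
    rw [star_mul (R := ℍ[ℂ]), star_star] at h
    rw [h, ← algebraMap_def]
    exact Set.algebraMap_mem_center _

end DHC

/-- If `m conj m = 0` and `n + conj n` is a scalar, then
`(mn) conj(mn) = (nm) conj(nm) = m conj(mn) + (mn) conj m
= m conj(nm) + (nm) conj m = 0`; consequently, by the null-line criterion, the
lines `[m] ∨ [mn]` and `[m] ∨ [nm]` are null lines. -/
theorem null_lines_through_m (m n : DHC)
    (hm : m * dconj m = 0) (hn : ∃ c : ℂ, n + dconj n = algebraMap ℂ DHC c) :
    (m * n) * dconj (m * n) = 0 ∧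
    (n * m) * dconj (n * m) = 0 ∧
    m * dconj (m * n) + (m * n) * dconj m = 0 ∧
    m * dconj (n * m) + (n * m) * dconj m = 0 ∧
    (∀ a b : ℂ, (a • m + b • (m * n)) * dconj (a • m + b • (m * n)) = 0) ∧
    (∀ a b : ℂ, (a • m + b • (n * m)) * dconj (a • m + b • (n * m)) = 0) := by
  obtain ⟨c, hc⟩ := hn
  have hm : IsNull m := hm
  have hn : n + star n ∈ Set.center DHC := hc ▸ Set.algebraMap_mem_center c
  have hmn := hm.mul_right (DHC.mul_star_self_mem_center n)
  have hnm := hm.mul_left n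
  have hm_mn := hm.polarNorm_mul_right hn
  have hm_nm := hm.polarNorm_mul_left n
  exact ⟨hmn, hnm, hm_mn, hm_nm, hm.smul_add_smul DHC.star_complex_smul hmn hm_mn,
    hm.smul_add_smul DHC.star_complex_smul hnm hm_nm⟩
end

section
/- Two half-turn dual quaternions h₁, h₂ (satisfying hᵢ·conj(hᵢ) = 1, hᵢ + conj(hᵢ) = 0) representing rotations by π about two lines in Euclidean 3-space commute, h₁h₂ = h₂h₁, if and only if the two axes are either identical or orthogonal and co-planar. -/
/-!
Comparing primal and dual parts, `h₁h₂ = c h₂h₁` says `d₁d₂ = c d₂d₁` and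
`d₁m₂ + m₁d₂ = c (d₂m₁ + m₂d₁)`; taking norms gives `c = ±1`. For pure quaternions
`pq + qp = -2⟨p, q⟩`, so `c = -1` is exactly orthogonality and co-planarity. For `c = 1` the unit
vectors `d₁, d₂` commute, hence `d₂ = r d₁` with `r = ±1`; then `m₂ - r m₁` is a pure quaternion
commuting with `d₁` and orthogonal to it, hence zero.
-/

open Quaternion TrivSqZeroExt

/-- The dual quaternions: dual numbers over the real quaternions. -/
noncomputable abbrev DH := DualNumber (Quaternion ℝ)

theorem DualNumber.inl_add_inr_mul_eq_smul_mul_swap_iff {R A : Type*} [CommSemiring R] [Ring A]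
    [Algebra R A] (a b c d : A) (k : R) :
    (inl a + inr b : DualNumber A) * (inl c + inr d) = k • ((inl c + inr d) * (inl a + inr b)) ↔
      a * c = k • (c * a) ∧ a * d + b * c = k • (c * b + d * a) := by
  rw [TrivSqZeroExt.ext_iff]
  simp [add_comm]

namespace Quaternion

section CommRing

variable {R : Type*} [CommRing R]

theorem re_mul_star_comm (p q : ℍ[R]) : (p * star q).re = (q * star p).re := by
  rw [← re_star, star_mul, star_star]

theorem sq_eq_one_of_mul_eq_smul_mul_swap {p q : ℍ[R]} {c : R} (hp : p * star p = 1)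
    (hq : q * star q = 1) (h : p * q = c • (q * p)) : c ^ 2 = 1 := by
  rw [self_mul_star, ← coe_one, coe_injective.eq_iff] at hp hq
  have := congrArg normSq h
  rw [normSq_smul, map_mul, map_mul, hp, hq] at this
  simpa using this.symm

end CommRing

section Pure

variable {R : Type*} [CommRing R] [NoZeroDivisors R] [CharZero R]

theorem mul_swap_eq_star_mul {p q : ℍ[R]} (hp : p.re = 0) (hq : q.re = 0) :
    q * p = star (p * q) := by
  rw [star_mul, star_eq_neg.2 hp, star_eq_neg.2 hq, neg_mul_neg]

theorem re_mul_star_of_re_eq_zero {p q : ℍ[R]} (hq : q.re = 0) :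
    (p * star q).re = -(p * q).re := by
  rw [star_eq_neg.2 hq, mul_neg, re_neg]

theorem mul_add_mul_swap {p q : ℍ[R]} (hp : p.re = 0) (hq : q.re = 0) :
    p * q + q * p = ↑(-2 * (p * star q).re) := by
  rw [mul_swap_eq_star_mul hp hq, self_add_star', re_mul_star_of_re_eq_zero hq]
  ring_nf

theorem mul_eq_neg_mul_swap_iff {p q : ℍ[R]} (hp : p.re = 0) (hq : q.re = 0) :
    p * q = -(q * p) ↔ (p * star q).re = 0 := by
  rw [eq_neg_iff_add_eq_zero, mul_add_mul_swap hp hq, ← coe_zero, coe_injective.eq_iff]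
  simp

/-- `p * q` is real because it equals its conjugate `q * p`. -/
theorem eq_re_mul_star_smul_of_commute {p q : ℍ[R]} (hp : p.re = 0) (hq : q.re = 0)
    (hunit : p * star p = 1) (hpq : Commute p q) : q = (q * star p).re • p := by
  have hreal : p * q = ↑(p * q).re :=
    star_eq_self.1 (by rw [← mul_swap_eq_star_mul hp hq, hpq.eq])
  calc q = (star p * p) * q := by rw [star_comm_self', hunit, one_mul]
    _ = star p * ↑(p * q).re := by rw [mul_assoc, ← hreal]
    _ = (q * star p).re • p := by
      rw [← re_mul_star_comm, re_mul_star_of_re_eq_zero hq, star_eq_neg.2 hp, neg_mul,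
        mul_coe_eq_smul, neg_smul]

variable {d₁ m₁ d₂ m₂ : ℍ[R]}

theorem plucker_anticommute_iff (hd₁ : d₁.re = 0) (hd₂ : d₂.re = 0) (hm₁ : m₁.re = 0)
    (hm₂ : m₂.re = 0) :
    (d₁ * d₂ = -(d₂ * d₁) ∧ d₁ * m₂ + m₁ * d₂ = -(d₂ * m₁ + m₂ * d₁)) ↔
      ((d₁ * star d₂).re = 0 ∧ (d₁ * star m₂).re + (d₂ * star m₁).re = 0) := by
  refine and_congr (mul_eq_neg_mul_swap_iff hd₁ hd₂) ?_
  have hsum : d₁ * m₂ + m₁ * d₂ + (d₂ * m₁ + m₂ * d₁) =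
      ↑(-2 * ((d₁ * star m₂).re + (d₂ * star m₁).re)) := by
    rw [show d₁ * m₂ + m₁ * d₂ + (d₂ * m₁ + m₂ * d₁) = d₁ * m₂ + m₂ * d₁ + (m₁ * d₂ + d₂ * m₁) by
      abel, mul_add_mul_swap hd₁ hm₂, mul_add_mul_swap hm₁ hd₂, re_mul_star_comm m₁, ← coe_add]
    ring_nf
  rw [eq_neg_iff_add_eq_zero, hsum, ← coe_zero, coe_injective.eq_iff]
  simp

theorem plucker_eq_or_eq_neg_of_commute (hd₁ : d₁.re = 0) (hd₂ : d₂.re = 0) (hm₁ : m₁.re = 0)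
    (hm₂ : m₂.re = 0) (hu₁ : d₁ * star d₁ = 1) (hu₂ : d₂ * star d₂ = 1)
    (hpl₁ : (d₁ * star m₁).re = 0) (hpl₂ : (d₂ * star m₂).re = 0)
    (hd : Commute d₁ d₂) (hm : d₁ * m₂ + m₁ * d₂ = d₂ * m₁ + m₂ * d₁) :
    (d₂ = d₁ ∧ m₂ = m₁) ∨ (d₂ = -d₁ ∧ m₂ = -m₁) := by
  set r := (d₂ * star d₁).re
  have hd₂r : d₂ = r • d₁ := eq_re_mul_star_smul_of_commute hd₁ hd₂ hu₁ hd
  have hr : r * r = 1 := by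
    rw [hd₂r, star_smul, smul_mul_smul_comm, hu₁, ← coe_mul_eq_smul, mul_one, ← coe_one] at hu₂
    exact coe_injective hu₂
  rw [hd₂r] at hm hpl₂
  have hv : Commute d₁ (m₂ - r • m₁) := by
    rw [Commute, SemiconjBy, mul_sub, sub_mul, mul_smul_comm, smul_mul_assoc,
      sub_eq_sub_iff_add_eq_add]
    rw [mul_smul_comm, smul_mul_assoc] at hm
    rw [hm, add_comm]
  have hv₀ : m₂ - r • m₁ = 0 := by
    have hpl₂' : (d₁ * star m₂).re = 0 := by
      simpa [smul_mul_assoc, left_ne_zero_of_mul_eq_one hr] using hpl₂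
    rw [eq_re_mul_star_smul_of_commute hd₁ (by simp [hm₁, hm₂]) hu₁ hv, ← re_mul_star_comm]
    simp [mul_sub, hpl₁, hpl₂']
  rw [sub_eq_zero] at hv₀
  rcases mul_self_eq_one_iff.mp hr with h | h <;> rw [h] at hd₂r hv₀
  · left; simp [hd₂r, hv₀]
  · right; simp [hd₂r, hv₀]

end Pure

end Quaternion

/-- Two half-turns, about lines with normalised Plücker coordinates `(d₁, m₁)`
and `(d₂, m₂)` and represented by the dual quaternions `hᵢ = dᵢ + ε mᵢ`,
commute (as displacements, i.e. `h₁h₂` and `h₂h₁` agree up to a nonzero real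
factor) iff the two axes are identical (equal or opposite Plücker coordinates)
or orthogonal (`⟨d₁, d₂⟩ = 0`) and co-planar (`⟨d₁, m₂⟩ + ⟨d₂, m₁⟩ = 0`).
Here `⟨p, q⟩ = (p ⬝ conj q).re` is the Euclidean inner product. -/
theorem halfturns_commute_iff (d₁ m₁ d₂ m₂ : Quaternion ℝ)
    (hd₁ : d₁.re = 0) (hd₂ : d₂.re = 0) (hm₁ : m₁.re = 0) (hm₂ : m₂.re = 0)
    (hu₁ : d₁ * star d₁ = 1) (hu₂ : d₂ * star d₂ = 1)
    (hpl₁ : (d₁ * star m₁).re = 0) (hpl₂ : (d₂ * star m₂).re = 0) :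
    (∃ c : ℝ, c ≠ 0 ∧
        (inl d₁ + inr m₁ : DH) * (inl d₂ + inr m₂) =
          c • ((inl d₂ + inr m₂ : DH) * (inl d₁ + inr m₁))) ↔
      ((d₂ = d₁ ∧ m₂ = m₁) ∨ (d₂ = -d₁ ∧ m₂ = -m₁) ∨
        ((d₁ * star d₂).re = 0 ∧ (d₁ * star m₂).re + (d₂ * star m₁).re = 0)) := by
  simp only [DualNumber.inl_add_inr_mul_eq_smul_mul_swap_iff]
  rw [← plucker_anticommute_iff hd₁ hd₂ hm₁ hm₂]
  constructor
  · rintro ⟨c, -, hd, hm⟩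
    rcases sq_eq_one_iff.mp (sq_eq_one_of_mul_eq_smul_mul_swap hu₁ hu₂ hd) with rfl | rfl
    · rw [one_smul] at hd hm
      exact (plucker_eq_or_eq_neg_of_commute hd₁ hd₂ hm₁ hm₂ hu₁ hu₂ hpl₁ hpl₂ hd hm).imp_right
        Or.inl
    · rw [neg_one_smul] at hd hm
      exact Or.inr (Or.inr ⟨hd, hm⟩)
  · rintro (⟨rfl, rfl⟩ | ⟨rfl, rfl⟩ | hanti)
    · exact ⟨1, one_ne_zero, by simp⟩
    · exact ⟨1, one_ne_zero, by simp⟩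
    · exact ⟨-1, by norm_num, by simpa only [neg_one_smul] using hanti⟩
end

section
/- The vertical Darboux motion C(t) = (cε + k)t³ + (1 + ε(b − ck))t² + (k − εbk)t + 1 (the case a = 0 of the Darboux motion) intersects the exceptional generator [εH] precisely where its primal part (k t³ + t² + k t + 1) vanishes, namely at t = ±i, and at these parameter values the points [C(±i)] lie on the quadric Y, i.e., the dual parts d = C(±i)/ε satisfy d·conj(d) = 0. -/
open Quaternion TrivSqZeroExt

/-- The quaternion unit `k` in the complexified quaternions. -/
noncomputable def qk : Quaternion ℂ := ⟨0, 0, 0, 1⟩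

/-- The vertical Darboux motion
`C(t) = (cε + k)t³ + (1 + ε(b - ck))t² + (k - εbk)t + 1`. -/
noncomputable def darboux (b c : ℝ) (t : ℂ) : DHC :=
  t ^ 3 • ((c : ℂ) • DualNumber.eps + inl qk) +
    t ^ 2 • (1 + DualNumber.eps * inl ((b : ℂ) • 1 - (c : ℂ) • qk)) +
    t • (inl qk - DualNumber.eps * inl ((b : ℂ) • qk)) + 1

/-!
The primal part of `C(t)` factors as `(t² + 1)(1 + t k)`, and `1 + t k` never vanishes since its
real part is `1`; so `C` meets `[εH]` exactly at the roots `±i` of `t² + 1`. The dual part factors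
as `(c t + b) t (t - k)`, and `(t - k) conj(t - k) = t² + 1` vanishes at `t = ±i` as well.
-/

@[simp] lemma qk_re : qk.re = 0 := rfl
@[simp] lemma qk_imI : qk.imI = 0 := rfl
@[simp] lemma qk_imJ : qk.imJ = 0 := rfl
@[simp] lemma qk_imK : qk.imK = 1 := rfl

lemma sq_add_one_eq_zero_iff {t : ℂ} : t ^ 2 + 1 = 0 ↔ t = Complex.I ∨ t = -Complex.I := by
  rw [← sq_eq_sq_iff_eq_or_eq_neg, Complex.I_sq, add_eq_zero_iff_eq_neg]

lemma one_add_smul_qk_ne_zero (t : ℂ) : (1 : ℍ[ℂ]) + t • qk ≠ 0 := fun h => by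
  simpa using congrArg QuaternionAlgebra.re h

lemma darboux_fst (b c : ℝ) (t : ℂ) :
    (darboux b c t).fst = (t ^ 2 + 1) • (1 + t • qk) := by
  ext <;> simp [darboux]; ring

lemma darboux_snd (b c : ℝ) (t : ℂ) :
    (darboux b c t).snd = ((c * t + b) * t) • ((t : ℍ[ℂ]) - qk) := by
  ext <;> simp [darboux] <;> ring

lemma normSq_coe_sub_qk (t : ℂ) : normSq ((t : ℍ[ℂ]) - qk) = t ^ 2 + 1 := by
  simp [normSq_def']

/-- The vertical Darboux motion meets the exceptional generator `[εH]` (where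
the primal part vanishes) exactly at `t = ±i`, and at these parameter values
the dual part `d` satisfies `d ⬝ conj d = 0`, i.e. the points lie on the
quadric `Y`. -/
theorem darboux_meets_Y (b c : ℝ) :
    (∀ t : ℂ, (darboux b c t).fst = 0 ↔ (t = Complex.I ∨ t = -Complex.I)) ∧
    (∀ t : ℂ, (t = Complex.I ∨ t = -Complex.I) →
      (darboux b c t).snd * star (darboux b c t).snd = 0) := by
  refine ⟨fun t => ?_, fun t ht => ?_⟩
  · rw [darboux_fst, ← sq_add_one_eq_zero_iff]
    exact smul_eq_zero.trans (or_iff_left (one_add_smul_qk_ne_zero t))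
  · rw [self_mul_star, darboux_snd, normSq_smul, normSq_coe_sub_qk, sq_add_one_eq_zero_iff.2 ht,
      mul_zero, coe_zero]
end

section
/- Let h₁, h₂ be dual quaternions with h₁h₂ ≠ h₂h₁. The set of points [R(t₁,t₂)] with R(t₁,t₂) = (t₁ − h₁)(t₂ − h₂) = t₁t₂ − t₁h₂ − t₂h₁ + h₁h₂, for t₁, t₂ ranging over ℝ ∪ {∞}, is contained in the projective 3-space spanned by [1], [h₁], [h₂], [h₁h₂]; and if 1, h₁, h₂, h₁h₂ are linearly independent, then in projective coordinates [x₀, x₁, x₂, x₃] with respect to these base points the image is exactly the quadric x₀x₃ − x₁x₂ = 0, which is a regular ruled quadric. -/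
open Quaternion TrivSqZeroExt Matrix

/-- Homogeneous parameterisation of the 2R constraint surface
`R(t₁, t₂) = (t₁ - h₁)(t₂ - h₂)`, where the parameter value `∞` corresponds to
`(aᵢ : bᵢ) = (1 : 0)` and the finite value `tᵢ` to `(tᵢ : 1)`. -/
noncomputable def R2R (h₁ h₂ : DH) (a₁ b₁ a₂ b₂ : ℝ) : DH :=
  (a₁ • (1 : DH) - b₁ • h₁) * (a₂ • (1 : DH) - b₂ • h₂)

/-! Expanding, `R(t₁, t₂) = t₁t₂ · 1 - t₁ · h₂ - t₂ · h₁ + h₁h₂`, so with respect to the base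
points `1, h₂, h₁, h₁h₂` the point `R` has coordinates `(a₁a₂, -a₁b₂, -b₁a₂, b₁b₂)`: the Segre
embedding of `P¹ × P¹`. When the base points are linearly independent these coordinates are
determined up to a common scalar, and the Segre image is the quadric `x₀x₃ = x₁x₂`, since a
nonzero `2 × 2` matrix `[[x₀, -x₁], [-x₂, x₃]]` has determinant zero exactly when it is the
product of a column and a row. -/

section CoordinatePoint

variable {K A : Type*} [CommRing K] [Ring A] [Module K A]

def coordPoint (h₁ h₂ : A) (x : Fin 4 → K) : A :=
  x 0 • (1 : A) + x 1 • h₂ + x 2 • h₁ + x 3 • (h₁ * h₂)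

def segre (a₁ b₁ a₂ b₂ : K) : Fin 4 → K :=
  ![a₁ * a₂, -(a₁ * b₂), -(b₁ * a₂), b₁ * b₂]

def quadric (x : Fin 4 → K) : K :=
  x 0 * x 3 - x 1 * x 2

theorem quadric_segre (a₁ b₁ a₂ b₂ : K) : quadric (segre a₁ b₁ a₂ b₂) = 0 := by
  simp only [quadric, segre, Matrix.cons_val]
  ring

theorem quadric_smul (c : K) (x : Fin 4 → K) : quadric (c • x) = c ^ 2 * quadric x := by
  simp only [quadric, Pi.smul_apply, smul_eq_mul]
  ring

theorem smul_one_sub_smul_mul_smul_one_sub_smul [IsScalarTower K A A] [SMulCommClass K A A]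
    (h₁ h₂ : A) (a₁ b₁ a₂ b₂ : K) :
    (a₁ • (1 : A) - b₁ • h₁) * (a₂ • (1 : A) - b₂ • h₂) =
      coordPoint h₁ h₂ (segre a₁ b₁ a₂ b₂) := by
  simp only [coordPoint, segre, Matrix.cons_val, mul_sub, sub_mul, smul_mul_smul_comm, one_mul,
    mul_one]
  module

theorem coordPoint_smul (h₁ h₂ : A) (c : K) (x : Fin 4 → K) :
    coordPoint h₁ h₂ (c • x) = c • coordPoint h₁ h₂ x := by
  simp only [coordPoint, Pi.smul_apply, smul_eq_mul, mul_smul, smul_add]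

theorem coordPoint_mem_span (h₁ h₂ : A) (x : Fin 4 → K) :
    coordPoint h₁ h₂ x ∈ Submodule.span K ({1, h₁, h₂, h₁ * h₂} : Set A) := by
  refine add_mem (add_mem (add_mem ?_ ?_) ?_) ?_ <;>
    exact Submodule.smul_mem _ _ (Submodule.subset_span (by simp))

theorem coordPoint_injective {h₁ h₂ : A}
    (hli : LinearIndependent K ![(1 : A), h₁, h₂, h₁ * h₂]) :
    Function.Injective (coordPoint (K := K) h₁ h₂) := by
  intro x y hxy
  -- `coordPoint` lists the base points as `1, h₂, h₁, h₁h₂`, the family as `1, h₁, h₂, h₁h₂`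
  have hcoeff := Fintype.linearIndependent_iffₛ.mp hli ![x 0, x 2, x 1, x 3] ![y 0, y 2, y 1, y 3]
    (by simpa [Fin.sum_univ_four, coordPoint, add_right_comm _ (x 1 • h₂),
      add_right_comm _ (y 1 • h₂)] using hxy)
  ext i
  fin_cases i
  exacts [hcoeff 0, hcoeff 2, hcoeff 1, hcoeff 3]

end CoordinatePoint

section Segre

variable {K : Type*} [Field K]

theorem exists_eq_mul_of_mul_eq_mul {p q r s : K} (hpq : (p, q) ≠ (0, 0)) (h : p * s = q * r) :
    ∃ l, r = l * p ∧ s = l * q := by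
  by_cases hp : p = 0
  · have hq : q ≠ 0 := by rintro rfl; exact hpq (by rw [hp])
    subst hp
    refine ⟨s / q, ?_, by field_simp⟩
    simpa [hq, eq_comm] using h
  · exact ⟨r / p, by field_simp, by field_simp; linear_combination h⟩

theorem exists_segre_eq_of_quadric_eq_zero {x : Fin 4 → K} (hx : x ≠ 0) (hq : quadric x = 0) :
    ∃ a₁ b₁ a₂ b₂ : K, (a₁, b₁) ≠ (0, 0) ∧ (a₂, b₂) ≠ (0, 0) ∧ segre a₁ b₁ a₂ b₂ = x := by
  have segre_eq : ∀ a₁ b₁ a₂ b₂ : K, a₁ * a₂ = x 0 → -(a₁ * b₂) = x 1 → -(b₁ * a₂) = x 2 →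
      b₁ * b₂ = x 3 → segre a₁ b₁ a₂ b₂ = x := by
    intro a₁ b₁ a₂ b₂ h0 h1 h2 h3
    ext i
    fin_cases i <;> assumption
  -- `x` must be the rank-one matrix `[[x 0, -x 1], [-x 2, x 3]] = (a₁, b₁)ᵀ (a₂, b₂)`, and
  -- `(a₂, b₂)` can be taken to be a nonzero row of it
  by_cases htop : (x 0, -x 1) = (0, 0)
  · simp only [Prod.mk.injEq, neg_eq_zero] at htop
    have hbot : (-x 2, x 3) ≠ (0, 0) := by
      intro hbot
      simp only [Prod.mk.injEq, neg_eq_zero] at hbot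
      exact hx (by ext i; fin_cases i <;> simp [htop.1, htop.2, hbot.1, hbot.2])
    exact ⟨0, 1, -x 2, x 3, by simp, hbot, segre_eq _ _ _ _ (by simp [htop.1])
      (by simp [htop.2]) (by ring) (by ring)⟩
  · obtain ⟨l, hl2, hl3⟩ := exists_eq_mul_of_mul_eq_mul htop (r := -x 2) (s := x 3)
      (by rw [quadric] at hq; linear_combination hq)
    exact ⟨1, l, x 0, -x 1, by simp, htop, segre_eq _ _ _ _ (by ring) (by ring)
      (by linear_combination hl2) (by linear_combination -hl3)⟩

end Segre

section QuadricMatrix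

variable {K : Type*} [Field K]

variable (K) in
def quadricMatrix : Matrix (Fin 4) (Fin 4) K :=
  !![0, 0, 0, 1 / 2; 0, 0, -1 / 2, 0; 0, -1 / 2, 0, 0; 1 / 2, 0, 0, 0]

theorem quadricMatrix_isSymm : (quadricMatrix K).IsSymm := by
  ext i j
  fin_cases i <;> fin_cases j <;> rfl

theorem isUnit_det_quadricMatrix [NeZero (2 : K)] : IsUnit (quadricMatrix K).det := by
  refine Matrix.isUnit_det_of_right_inverse
    (B := !![0, 0, 0, 2; 0, 0, -2, 0; 0, -2, 0, 0; 2, 0, 0, 0]) ?_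
  ext i j
  fin_cases i <;> fin_cases j <;> simp [quadricMatrix, Matrix.mul_apply, Fin.sum_univ_four] <;>
    field_simp

theorem dotProduct_quadricMatrix_mulVec [NeZero (2 : K)] (x : Fin 4 → K) :
    x ⬝ᵥ (quadricMatrix K).mulVec x = quadric x := by
  simp only [quadricMatrix, quadric, dotProduct, Matrix.mulVec, Fin.sum_univ_four, Matrix.of_apply,
    Matrix.cons_val]
  field_simp
  ring

end QuadricMatrix

-- instance search does not find this tower through `TrivSqZeroExt`
instance : IsScalarTower ℝ DH DH := @IsScalarTower.right ℝ DH _ _ _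

theorem R2R_eq_coordPoint_segre (h₁ h₂ : DH) (a₁ b₁ a₂ b₂ : ℝ) :
    R2R h₁ h₂ a₁ b₁ a₂ b₂ = coordPoint h₁ h₂ (segre a₁ b₁ a₂ b₂) :=
  smul_one_sub_smul_mul_smul_one_sub_smul h₁ h₂ a₁ b₁ a₂ b₂

theorem twoR_constraint_variety_general (h₁ h₂ : DH) :
    (∀ a₁ b₁ a₂ b₂ : ℝ,
      R2R h₁ h₂ a₁ b₁ a₂ b₂ ∈
        Submodule.span ℝ ({1, h₁, h₂, h₁ * h₂} : Set DH)) ∧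
    (LinearIndependent ℝ ![(1 : DH), h₁, h₂, h₁ * h₂] →
      ∀ x : Fin 4 → ℝ, x ≠ 0 →
        ((∃ a₁ b₁ a₂ b₂ c : ℝ, (a₁, b₁) ≠ (0, 0) ∧ (a₂, b₂) ≠ (0, 0) ∧ c ≠ 0 ∧
            c • (x 0 • (1 : DH) + x 1 • h₂ + x 2 • h₁ + x 3 • (h₁ * h₂)) =
              R2R h₁ h₂ a₁ b₁ a₂ b₂) ↔
          x 0 * x 3 - x 1 * x 2 = 0)) ∧
    (∃ Q : Matrix (Fin 4) (Fin 4) ℝ, Q.IsSymm ∧ IsUnit Q.det ∧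
      ∀ x : Fin 4 → ℝ, x ⬝ᵥ Q.mulVec x = x 0 * x 3 - x 1 * x 2) := by
  refine ⟨fun a₁ b₁ a₂ b₂ => ?_, fun hli x hx => ⟨?_, fun hq => ?_⟩,
    ⟨quadricMatrix ℝ, quadricMatrix_isSymm, isUnit_det_quadricMatrix,
      dotProduct_quadricMatrix_mulVec⟩⟩
  · rw [R2R_eq_coordPoint_segre]
    exact coordPoint_mem_span h₁ h₂ _
  · rintro ⟨a₁, b₁, a₂, b₂, c, -, -, hc, hpoint⟩
    have hcoord : coordPoint h₁ h₂ (c • x) = coordPoint h₁ h₂ (segre a₁ b₁ a₂ b₂) := by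
      rw [coordPoint_smul, ← R2R_eq_coordPoint_segre, ← hpoint, coordPoint]
    have hscaled := quadric_segre a₁ b₁ a₂ b₂
    rw [← coordPoint_injective hli hcoord, quadric_smul] at hscaled
    exact (mul_eq_zero.mp hscaled).resolve_left (pow_ne_zero 2 hc)
  · obtain ⟨a₁, b₁, a₂, b₂, h₁₀, h₂₀, hsegre⟩ := exists_segre_eq_of_quadric_eq_zero hx hq
    refine ⟨a₁, b₁, a₂, b₂, 1, h₁₀, h₂₀, one_ne_zero, ?_⟩
    rw [one_smul, R2R_eq_coordPoint_segre, hsegre, coordPoint]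

/-- The kinematic image of a 2R dyad with `h₁h₂ ≠ h₂h₁`: every point
`R(t₁, t₂) = (t₁ - h₁)(t₂ - h₂)` lies in the projective three-space spanned by
`[1], [h₁], [h₂], [h₁h₂]`; and if `1, h₁, h₂, h₁h₂` are linearly independent,
then in projective coordinates `[x₀, x₁, x₂, x₃]` with respect to the base
points `[1], [h₂], [h₁], [h₁h₂]` the image is exactly the quadric
`x₀x₃ - x₁x₂ = 0`, which is regular (its symmetric matrix is invertible) and
ruled (swept by the parameter lines). -/
theorem twoR_constraint_variety (h₁ h₂ : DH) (hcomm : h₁ * h₂ ≠ h₂ * h₁) :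
    (∀ a₁ b₁ a₂ b₂ : ℝ,
      R2R h₁ h₂ a₁ b₁ a₂ b₂ ∈
        Submodule.span ℝ ({1, h₁, h₂, h₁ * h₂} : Set DH)) ∧
    (LinearIndependent ℝ ![(1 : DH), h₁, h₂, h₁ * h₂] →
      ∀ x : Fin 4 → ℝ, x ≠ 0 →
        ((∃ a₁ b₁ a₂ b₂ c : ℝ, (a₁, b₁) ≠ (0, 0) ∧ (a₂, b₂) ≠ (0, 0) ∧ c ≠ 0 ∧
            c • (x 0 • (1 : DH) + x 1 • h₂ + x 2 • h₁ + x 3 • (h₁ * h₂)) =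
              R2R h₁ h₂ a₁ b₁ a₂ b₂) ↔
          x 0 * x 3 - x 1 * x 2 = 0)) ∧
    (∃ Q : Matrix (Fin 4) (Fin 4) ℝ, Q.IsSymm ∧ IsUnit Q.det ∧
      ∀ x : Fin 4 → ℝ, x ⬝ᵥ Q.mulVec x = x 0 * x 3 - x 1 * x 2) :=
  twoR_constraint_variety_general h₁ h₂
end
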